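/- Let A ∈ ℝ^{m×n} be a matrix, let b = Ax + z with ‖Aᵀz‖_∞ ≤ ε, let λ > 0, and let x^♯ be a minimizer of u ↦ ‖u‖₁ + (1/(2λ))‖Aᵀ(b − Au)‖_∞². Set h = x^♯ − x. Then for every subset E ⊂ {1,…,n}, ‖AᵀAh‖_∞² − 2ε‖AᵀAh‖_∞ ≤ 2λ(‖h_E‖₁ − ‖h_{E^c}‖₁ + 2‖x_{E^c}‖₁). -/

import Mathlib

noncomputable def l2norm {ι : Type*} [Fintype ι] (v : ι → ℝ) : ℝ :=
  Real.sqrt (∑ i, (v i) ^ 2)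

noncomputable def l1norm {ι : Type*} [Fintype ι] (v : ι → ℝ) : ℝ :=
  ∑ i, |v i|

noncomputable def linfnorm {ι : Type*} [Fintype ι] (v : ι → ℝ) : ℝ :=
  ⨆ i, |v i|

/-- The mutual coherence of a matrix: the largest absolute inner product
between two distinct columns. -/
noncomputable def mutualCoherence {m n : ℕ} (A : Matrix (Fin m) (Fin n) ℝ) : ℝ :=
  ⨆ p : {p : Fin n × Fin n // p.1 ≠ p.2}, |∑ r, A r p.1.1 * A r p.1.2|

/-- `restrict v E` agrees with `v` on `E` and vanishes outside of `E`. -/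
def restrict {n : ℕ} (v : Fin n → ℝ) (E : Finset (Fin n)) : Fin n → ℝ :=
  fun i => if i ∈ E then v i else 0

/-- A vector is `k`-sparse if it has at most `k` nonzero entries. -/
def sparse {n : ℕ} (k : ℕ) (v : Fin n → ℝ) : Prop :=
  (Finset.univ.filter fun i => v i ≠ 0).card ≤ k

noncomputable def alpha1 (k : ℕ) (μ : ℝ) : ℝ :=
  Real.sqrt (1 + ((k : ℝ) - 1) * μ) / (1 - ((k : ℝ) - 1) * μ)

noncomputable def alpha2 (k : ℕ) (μ : ℝ) : ℝ :=
  Real.sqrt k * μ / (1 - ((k : ℝ) - 1) * μ)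

noncomputable def fk (k : ℕ) (t : ℝ) : ℝ :=
  (k : ℝ) * t ^ 2 + 3 * Real.sqrt k * t + 3

noncomputable def gk (k : ℕ) (t : ℝ) : ℝ :=
  2 * (k : ℝ) * t ^ 2 + 4 * Real.sqrt k * t + 1

/-!
Let `h = x♯ - x` and `r = Aᵀ(b - A x♯) = Aᵀz - AᵀAh`. Comparing the objective at `x♯` with its value
at `x` gives `‖r‖∞² - ‖Aᵀz‖∞² ≤ 2λ (‖x‖₁ - ‖x♯‖₁)`. The reverse triangle inequality
`|‖AᵀAh‖∞ - ‖Aᵀz‖∞| ≤ ‖r‖∞` bounds the left side from below by `‖AᵀAh‖∞² - 2‖Aᵀz‖∞ ‖AᵀAh‖∞`,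
and splitting `‖x‖₁ - ‖x♯‖₁` over `E` and `Eᶜ` gives the usual cone estimate on the right.
-/

lemma linfnorm_eq_norm {ι : Type*} [Fintype ι] (v : ι → ℝ) : linfnorm v = ‖v‖ := by
  refine le_antisymm (Real.iSup_le (fun i => norm_le_pi_norm v i) (norm_nonneg v)) ?_
  refine (pi_norm_le_iff_of_nonneg (Real.iSup_nonneg fun _ => abs_nonneg _)).mpr fun i => ?_
  exact le_ciSup (f := fun i => |v i|) (Set.finite_range _).bddAbove i

lemma l1norm_restrict {n : ℕ} (v : Fin n → ℝ) (E : Finset (Fin n)) :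
    l1norm (restrict v E) = ∑ i ∈ E, |v i| := by
  simp only [l1norm, restrict, apply_ite, abs_zero, Finset.sum_ite_mem, Finset.univ_inter]

lemma l1norm_eq_sum_add_sum_compl {ι : Type*} [Fintype ι] [DecidableEq ι] (v : ι → ℝ)
    (E : Finset ι) :
    l1norm v = ∑ i ∈ E, |v i| + ∑ i ∈ Eᶜ, |v i| :=
  (Finset.sum_add_sum_compl E _).symm

lemma l1norm_sub_l1norm_le {n : ℕ} (x y : Fin n → ℝ) (E : Finset (Fin n)) :
    l1norm x - l1norm y ≤
      l1norm (restrict (y - x) E) - l1norm (restrict (y - x) Eᶜ) + 2 * l1norm (restrict x Eᶜ) := by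
  rw [l1norm_restrict, l1norm_restrict, l1norm_restrict, l1norm_eq_sum_add_sum_compl x E,
    l1norm_eq_sum_add_sum_compl y E, Finset.mul_sum]
  have hE : ∑ i ∈ E, (|x i| - |y i|) ≤ ∑ i ∈ E, |(y - x) i| :=
    Finset.sum_le_sum fun i _ => by
      rw [Pi.sub_apply, abs_sub_comm]; exact abs_sub_abs_le_abs_sub _ _
  have hEc : ∑ i ∈ Eᶜ, (|x i| - |y i|) ≤ ∑ i ∈ Eᶜ, (2 * |x i| - |(y - x) i|) :=
    Finset.sum_le_sum fun i _ => by
      have := abs_sub (y i) (x i); rw [Pi.sub_apply]; linarith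
  simp only [Finset.sum_sub_distrib] at hE hEc
  linarith

lemma transpose_mulVec_residual {m n : ℕ} (A : Matrix (Fin m) (Fin n) ℝ) (x u : Fin n → ℝ)
    (z : Fin m → ℝ) :
    A.transpose.mulVec (A.mulVec x + z - A.mulVec u) =
      A.transpose.mulVec z - A.transpose.mulVec (A.mulVec (u - x)) := by
  rw [show A.mulVec x + z - A.mulVec u = z - A.mulVec (u - x) by rw [Matrix.mulVec_sub]; abel,
    Matrix.mulVec_sub]

theorem stmt_12 {m n : ℕ} (A : Matrix (Fin m) (Fin n) ℝ)
    (x : Fin n → ℝ) (z : Fin m → ℝ) (b : Fin m → ℝ) (hb : b = A.mulVec x + z)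
    (ε lam : ℝ) (hz : linfnorm (A.transpose.mulVec z) ≤ ε) (hlam : 0 < lam)
    (xs : Fin n → ℝ)
    (hmin : ∀ u : Fin n → ℝ,
      l1norm xs + 1 / (2 * lam) * linfnorm (A.transpose.mulVec (b - A.mulVec xs)) ^ 2 ≤
        l1norm u + 1 / (2 * lam) * linfnorm (A.transpose.mulVec (b - A.mulVec u)) ^ 2)
    (E : Finset (Fin n)) :
    linfnorm (A.transpose.mulVec (A.mulVec (xs - x))) ^ 2
        - 2 * ε * linfnorm (A.transpose.mulVec (A.mulVec (xs - x))) ≤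
      2 * lam * (l1norm (restrict (xs - x) E) - l1norm (restrict (xs - x) Eᶜ)
        + 2 * l1norm (restrict x Eᶜ)) := by
  subst hb
  have hobj := hmin x
  rw [transpose_mulVec_residual, transpose_mulVec_residual, sub_self, Matrix.mulVec_zero,
    Matrix.mulVec_zero, sub_zero] at hobj
  set e := A.transpose.mulVec z
  set w := A.transpose.mulVec (A.mulVec (xs - x))
  simp only [linfnorm_eq_norm] at hobj hz ⊢
  have hdescent : ‖e - w‖ ^ 2 - ‖e‖ ^ 2 ≤ 2 * lam * (l1norm x - l1norm xs) := by
    have := mul_le_mul_of_nonneg_left hobj (by positivity : (0 : ℝ) ≤ 2 * lam)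
    field_simp at this
    linarith
  have hcone := mul_le_mul_of_nonneg_left (l1norm_sub_l1norm_le x xs E) hlam.le
  have htri : |‖e‖ - ‖w‖| ≤ ‖e - w‖ := abs_norm_sub_norm_le e w
  have hw := norm_nonneg w
  nlinarith [abs_le.mp htri, norm_nonneg (e - w), mul_le_mul_of_nonneg_right hz hw]
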